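/- arXiv:1809.02798 — 3 statements merged into one kernel-verified Lean document; each statement's English description precedes it below -/
import Mathlib

section
/- Let k ≥ 2 and let μ be a linear functional on the Sekine algebra A_k with coefficient family (α, κ). Then μ is an idempotent state on (A_k, Δ_k) — i.e. μ(1) = 1, μ(a*a) ≥ 0 for all a ∈ A_k, and (μ⊗μ)∘Δ_k = μ — if and only if: every α_{i,j} is a nonnegative real number, the matrix K = [κ_{r,s}]_{r,s∈ℤ_k} is positive semidefinite, and the following equations hold: (A) α_{i,j} = Σ_{r,s∈ℤ_k} α_{i−r,j−s} α_{r,s} + (1/k) Σ_{r,s∈ℤ_k} η^{i(r−s)} κ_{r,s} κ_{r+j,s+j} for all i,j ∈ ℤ_k; (B) κ_{r,s} = Σ_{i,j∈ℤ_k} η^{i(s−r)} α_{i,j} (κ_{r+j,s+j} + κ_{r−j,s−j}) for all r,s ∈ ℤ_k; (C) Σ_{i,j∈ℤ_k} α_{i,j} + Σ_{r∈ℤ_k} κ_{r,r} = 1. -/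
/-!
Statement 1: a linear functional `μ` with coefficient family `(α, κ)` on the
Sekine algebra is an idempotent state (i.e. `μ(1) = 1`, `μ(a⋆a) ≥ 0` for all
`a`, and `(μ ⊗ μ) ∘ Δ = μ`) if and only if all `α_{i,j}` are nonnegative
reals, `K = [κ_{r,s}]` is positive semidefinite, and equations (A), (B), (C)
hold.  The comultiplication `Δ` is hypothesized via its defining formulas on
the basis.  The order `0 ≤ ·` on `ℂ` (scoped `ComplexOrder`) expresses
"nonnegative real".
-/

open Finset
open scoped TensorProduct ComplexOrder

noncomputable section

/-- `η^t` for `t ∈ ℤ_k`, where `η = exp(2πi/k)`. -/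
def etac (k : ℕ) [NeZero k] (t : ZMod k) : ℂ :=
  Complex.exp (2 * (Real.pi : ℂ) * Complex.I * (t.val : ℂ) / (k : ℂ))

/-- The Sekine algebra `A_k = ⊕_{i,j} ℂ d_{i,j} ⊕ M_k(ℂ)`; the product ring
structure gives pointwise multiplication on the first component, matrix
multiplication on the second, star is complex conjugation resp. conjugate
transpose, and the unit is `(1, I)`. -/
abbrev Sek (k : ℕ) := (ZMod k × ZMod k → ℂ) × Matrix (ZMod k) (ZMod k) ℂ

/-- The basis element `d_{i,j}` of the commutative part. -/
def dEl (k : ℕ) (i j : ZMod k) : Sek k := (fun x => if x = (i, j) then 1 else 0, 0)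

/-- The matrix unit `e_{r,s}` of the matrix part. -/
def eEl (k : ℕ) [NeZero k] (r s : ZMod k) : Sek k := (0, Matrix.single r s 1)

/-- The linear functional `Σ α_{i,j} d̃_{i,j} + Σ κ_{r,s} ẽ_{r,s}` with coefficient
family `(α, κ)`. -/
def funcOf (k : ℕ) [NeZero k] (α κ : ZMod k → ZMod k → ℂ) : Sek k →ₗ[ℂ] ℂ where
  toFun a := (∑ i : ZMod k, ∑ j : ZMod k, α i j * a.1 (i, j))
    + ∑ r : ZMod k, ∑ s : ZMod k, κ r s * a.2 r s
  map_add' a b := by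
    simp only [Prod.fst_add, Prod.snd_add, Pi.add_apply, Matrix.add_apply, mul_add,
      Finset.sum_add_distrib]
    ring
  map_smul' c a := by
    simp only [Prod.smul_fst, Prod.smul_snd, Pi.smul_apply, Matrix.smul_apply, smul_eq_mul,
      RingHom.id_apply, mul_add, Finset.mul_sum]
    congr 1 <;>
      exact Finset.sum_congr rfl fun _ _ => Finset.sum_congr rfl fun _ _ => by ring

/-!
The three conditions defining an idempotent state separate. Normalisation `μ 1 = 1` is (C).
Since `A_k = ℂ^{k²} ⊕ M_k(ℂ)`, `μ (a⋆a) = Σ α_{ij} |a_{ij}|² + Σ_t ⟨X_t, K X_t⟩` where the `X_t`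
are the rows of the matrix part of `a`, so positivity amounts to `α ≥ 0` and `K ⪰ 0`. Finally
`(μ ⊗ μ) ∘ Δ` and `μ` are linear, hence equal iff they agree on the basis `d_{ij}`, `e_{rs}`, and
evaluating the defining formulas of `Δ` there gives (A) and (B); for (B) the `d ⊗ e` half of
`Δ(e_{rs})` is reindexed by `(m, n) ↦ (-m, -n)`.
-/

open Matrix

def comulConv {R A : Type*} [CommSemiring R] [AddCommMonoid A] [Module R A]
    (Δ : A →ₗ[R] A ⊗[R] A) (μ ν : A →ₗ[R] R) : A →ₗ[R] R :=
  (TensorProduct.lid R R).toLinearMap ∘ₗ TensorProduct.map μ ν ∘ₗ Δ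

/-- Over `ℂ`, unlike over `ℝ`, nonnegativity of the quadratic form already forces `M` to be
Hermitian. -/
theorem Matrix.posSemidef_of_forall_dotProduct_mulVec_nonneg {n : Type*} [Fintype n]
    [DecidableEq n] {M : Matrix n n ℂ} (h : ∀ x, 0 ≤ star x ⬝ᵥ (M *ᵥ x)) : M.PosSemidef := by
  rw [← isPositive_toEuclideanLin_iff, LinearMap.isPositive_iff_complex]
  intro x
  have hx := h x
  have hstar : x.ofLp ⬝ᵥ star (M *ᵥ x.ofLp) = star x.ofLp ⬝ᵥ M *ᵥ x.ofLp := by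
    rw [dotProduct_comm, star_dotProduct, (IsSelfAdjoint.of_nonneg hx).star_eq]
  simp only [EuclideanSpace.inner_eq_star_dotProduct, ofLp_toLpLin, toLin'_apply, hstar]
  obtain ⟨hre, him⟩ := Complex.nonneg_iff.mp hx
  exact ⟨Complex.ext rfl him, hre⟩

namespace Sek

lemma dEl_eq_inl {k : ℕ} (i j : ZMod k) :
    dEl k i j = LinearMap.inl ℂ _ (Matrix (ZMod k) (ZMod k) ℂ) (Pi.single (i, j) 1) := by
  ext x <;> simp [dEl, Pi.single_apply]

variable {k : ℕ} [NeZero k]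

lemma eEl_eq_inr (r s : ZMod k) :
    eEl k r s = LinearMap.inr ℂ (ZMod k × ZMod k → ℂ) _ (Matrix.single r s 1) := rfl

lemma linearMap_ext_iff {M : Type*} [AddCommMonoid M] [Module ℂ M] {f g : Sek k →ₗ[ℂ] M} :
    f = g ↔ (∀ i j, f (dEl k i j) = g (dEl k i j)) ∧ ∀ r s, f (eEl k r s) = g (eEl k r s) := by
  refine ⟨by rintro rfl; simp, fun ⟨hd, he⟩ => ?_⟩
  refine LinearMap.prod_ext (LinearMap.pi_ext' fun ij => LinearMap.ext_ring ?_)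
    (Matrix.ext_linearMap ℂ fun r s => LinearMap.ext_ring ?_)
  · simpa [dEl_eq_inl] using hd ij.1 ij.2
  · simpa [eEl_eq_inr] using he r s

end Sek

section Functional

variable {k : ℕ} [NeZero k] (α κ : ZMod k → ZMod k → ℂ)

lemma funcOf_apply (a : Sek k) : funcOf k α κ a =
    (∑ i : ZMod k, ∑ j : ZMod k, α i j * a.1 (i, j))
      + ∑ r : ZMod k, ∑ s : ZMod k, κ r s * a.2 r s := rfl

lemma funcOf_dEl (i j : ZMod k) : funcOf k α κ (dEl k i j) = α i j := by
  simp [funcOf_apply, dEl, Prod.ext_iff, ite_and, Finset.sum_ite_eq']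

lemma funcOf_eEl (r s : ZMod k) : funcOf k α κ (eEl k r s) = κ r s := by
  simp [funcOf_apply, eEl, Matrix.single, ite_and]

lemma funcOf_one : funcOf k α κ 1 =
    (∑ i : ZMod k, ∑ j : ZMod k, α i j) + ∑ r : ZMod k, κ r r := by
  simp [funcOf_apply, Matrix.one_apply]

lemma funcOf_star_mul_self (a : Sek k) : funcOf k α κ (star a * a) =
    (∑ i : ZMod k, ∑ j : ZMod k, α i j * (star (a.1 (i, j)) * a.1 (i, j)))
      + ∑ t : ZMod k, star (a.2 t) ⬝ᵥ (of κ *ᵥ a.2 t) := by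
  simp only [funcOf_apply, Prod.fst_mul, Prod.snd_mul, Prod.fst_star, Prod.snd_star,
    Pi.mul_apply, Pi.star_apply, mul_apply, star_apply, dotProduct, mulVec, of_apply,
    Finset.mul_sum]
  congr 1
  refine (Finset.sum_congr rfl fun r _ => Finset.sum_comm).trans (Finset.sum_comm.trans ?_)
  exact Finset.sum_congr rfl fun t _ => Finset.sum_congr rfl fun r _ =>
    Finset.sum_congr rfl fun s _ => by ring

lemma funcOf_star_mul_self_nonneg_iff :
    (∀ a : Sek k, 0 ≤ funcOf k α κ (star a * a)) ↔ (∀ i j, 0 ≤ α i j) ∧ (of κ).PosSemidef := by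
  refine ⟨fun h => ⟨fun i j => ?_, posSemidef_of_forall_dotProduct_mulVec_nonneg fun x => ?_⟩,
    fun ⟨hα, hκ⟩ a => ?_⟩
  · have hd := h (dEl k i j)
    simp only [funcOf_star_mul_self, dEl] at hd
    have hrow (t : ZMod k) : (0 : Matrix (ZMod k) (ZMod k) ℂ) t = 0 := rfl
    simpa [Prod.ext_iff, ite_and, hrow] using hd
  · have hx := h (0, (Pi.single 0 x : Matrix (ZMod k) (ZMod k) ℂ))
    simp only [funcOf_star_mul_self, Pi.zero_apply, star_zero, mul_zero,
      Finset.sum_const_zero, zero_add] at hx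
    rwa [Fintype.sum_eq_single 0 fun t ht => by
      rw [Pi.single_eq_of_ne ht, star_zero, zero_dotProduct], Pi.single_eq_same] at hx
  · rw [funcOf_star_mul_self]
    exact add_nonneg
      (Finset.sum_nonneg fun i _ => Finset.sum_nonneg fun j _ =>
        mul_nonneg (hα i j) (star_mul_self_nonneg _))
      (Finset.sum_nonneg fun t _ => hκ.dotProduct_mulVec_nonneg _)

end Functional

section Comultiplication

variable {k : ℕ} [NeZero k] (Δ : Sek k →ₗ[ℂ] Sek k ⊗[ℂ] Sek k) (α κ : ZMod k → ZMod k → ℂ)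

lemma comulConv_funcOf_dEl (i j : ZMod k) (hd : Δ (dEl k i j) =
      (∑ m : ZMod k, ∑ n : ZMod k, dEl k m n ⊗ₜ[ℂ] dEl k (i - m) (j - n))
        + (1 / (k : ℂ)) • ∑ m : ZMod k, ∑ n : ZMod k,
            etac k (i * (m - n)) • (eEl k m n ⊗ₜ[ℂ] eEl k (m + j) (n + j))) :
    comulConv Δ (funcOf k α κ) (funcOf k α κ) (dEl k i j) =
      (∑ r : ZMod k, ∑ s : ZMod k, α (i - r) (j - s) * α r s)
        + (1 / (k : ℂ)) * ∑ r : ZMod k, ∑ s : ZMod k,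
            etac k (i * (r - s)) * (κ r s * κ (r + j) (s + j)) := by
  simp only [comulConv, LinearMap.comp_apply, hd, map_add, map_smul, map_sum,
    TensorProduct.map_tmul, LinearEquiv.coe_coe, TensorProduct.lid_tmul, funcOf_dEl, funcOf_eEl,
    smul_eq_mul]
  congr 1
  exact Finset.sum_congr rfl fun m _ => Finset.sum_congr rfl fun n _ => mul_comm _ _

lemma comulConv_funcOf_eEl (r s : ZMod k) (he : Δ (eEl k r s) =
      (∑ m : ZMod k, ∑ n : ZMod k,
          etac k (m * (r - s)) • (dEl k (-m) (-n) ⊗ₜ[ℂ] eEl k (r - n) (s - n)))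
        + ∑ m : ZMod k, ∑ n : ZMod k,
            etac k (m * (s - r)) • (eEl k (r - n) (s - n) ⊗ₜ[ℂ] dEl k m n)) :
    comulConv Δ (funcOf k α κ) (funcOf k α κ) (eEl k r s) =
      ∑ i : ZMod k, ∑ j : ZMod k,
        etac k (i * (s - r)) * α i j * (κ (r + j) (s + j) + κ (r - j) (s - j)) := by
  simp only [comulConv, LinearMap.comp_apply, he, map_add, map_smul, map_sum,
    TensorProduct.map_tmul, LinearEquiv.coe_coe, TensorProduct.lid_tmul, funcOf_dEl, funcOf_eEl,
    smul_eq_mul]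
  have hneg : ∑ m : ZMod k, ∑ n : ZMod k, etac k (m * (r - s)) * (α (-m) (-n) * κ (r - n) (s - n))
      = ∑ m : ZMod k, ∑ n : ZMod k, etac k (m * (s - r)) * (α m n * κ (r + n) (s + n)) := by
    rw [← Equiv.sum_comp (Equiv.neg (ZMod k))]
    refine Finset.sum_congr rfl fun m _ => ?_
    rw [← Equiv.sum_comp (Equiv.neg (ZMod k))]
    refine Finset.sum_congr rfl fun n _ => ?_
    simp only [Equiv.neg_apply, neg_neg, sub_neg_eq_add]
    rw [show -m * (r - s) = m * (s - r) by ring]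
  rw [hneg, ← Finset.sum_add_distrib]
  refine Finset.sum_congr rfl fun i _ => ?_
  rw [← Finset.sum_add_distrib]
  exact Finset.sum_congr rfl fun j _ => by ring

end Comultiplication

theorem stmt1_general (k : ℕ) [NeZero k]
    (Δ : Sek k →ₗ[ℂ] Sek k ⊗[ℂ] Sek k)
    (hd : ∀ i j : ZMod k, Δ (dEl k i j) =
      (∑ m : ZMod k, ∑ n : ZMod k, dEl k m n ⊗ₜ[ℂ] dEl k (i - m) (j - n))
        + (1 / (k : ℂ)) • ∑ m : ZMod k, ∑ n : ZMod k,
            etac k (i * (m - n)) • (eEl k m n ⊗ₜ[ℂ] eEl k (m + j) (n + j)))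
    (he : ∀ i j : ZMod k, Δ (eEl k i j) =
      (∑ m : ZMod k, ∑ n : ZMod k,
          etac k (m * (i - j)) • (dEl k (-m) (-n) ⊗ₜ[ℂ] eEl k (i - n) (j - n)))
        + ∑ m : ZMod k, ∑ n : ZMod k,
            etac k (m * (j - i)) • (eEl k (i - n) (j - n) ⊗ₜ[ℂ] dEl k m n))
    (α κ : ZMod k → ZMod k → ℂ) :
    -- `μ = funcOf k α κ` is an idempotent state
    (funcOf k α κ 1 = 1 ∧
      (∀ a : Sek k, 0 ≤ funcOf k α κ (star a * a)) ∧
      (TensorProduct.lid ℂ ℂ).toLinearMap ∘ₗ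
          TensorProduct.map (funcOf k α κ) (funcOf k α κ) ∘ₗ Δ = funcOf k α κ)
    ↔
    -- the coefficient conditions
    ((∀ i j : ZMod k, 0 ≤ α i j) ∧
      (Matrix.of κ).PosSemidef ∧
      (∀ i j : ZMod k, α i j =
          (∑ r : ZMod k, ∑ s : ZMod k, α (i - r) (j - s) * α r s)
            + (1 / (k : ℂ)) * ∑ r : ZMod k, ∑ s : ZMod k,
                etac k (i * (r - s)) * (κ r s * κ (r + j) (s + j))) ∧
      (∀ r s : ZMod k, κ r s =
          ∑ i : ZMod k, ∑ j : ZMod k,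
            etac k (i * (s - r)) * α i j * (κ (r + j) (s + j) + κ (r - j) (s - j))) ∧
      ((∑ i : ZMod k, ∑ j : ZMod k, α i j) + ∑ r : ZMod k, κ r r = 1)) := by
  change _ ∧ _ ∧ comulConv Δ _ _ = _ ↔ _
  rw [funcOf_one, funcOf_star_mul_self_nonneg_iff, Sek.linearMap_ext_iff]
  simp only [comulConv_funcOf_dEl Δ α κ _ _ (hd _ _), comulConv_funcOf_eEl Δ α κ _ _ (he _ _),
    funcOf_dEl, funcOf_eEl, eq_comm (b := α _ _), eq_comm (b := κ _ _)]
  tauto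

theorem stmt1 (k : ℕ) [NeZero k] (hk : 2 ≤ k)
    (Δ : Sek k →ₗ[ℂ] Sek k ⊗[ℂ] Sek k)
    (hd : ∀ i j : ZMod k, Δ (dEl k i j) =
      (∑ m : ZMod k, ∑ n : ZMod k, dEl k m n ⊗ₜ[ℂ] dEl k (i - m) (j - n))
        + (1 / (k : ℂ)) • ∑ m : ZMod k, ∑ n : ZMod k,
            etac k (i * (m - n)) • (eEl k m n ⊗ₜ[ℂ] eEl k (m + j) (n + j)))
    (he : ∀ i j : ZMod k, Δ (eEl k i j) =
      (∑ m : ZMod k, ∑ n : ZMod k,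
          etac k (m * (i - j)) • (dEl k (-m) (-n) ⊗ₜ[ℂ] eEl k (i - n) (j - n)))
        + ∑ m : ZMod k, ∑ n : ZMod k,
            etac k (m * (j - i)) • (eEl k (i - n) (j - n) ⊗ₜ[ℂ] dEl k m n))
    (α κ : ZMod k → ZMod k → ℂ) :
    -- `μ = funcOf k α κ` is an idempotent state
    (funcOf k α κ 1 = 1 ∧
      (∀ a : Sek k, 0 ≤ funcOf k α κ (star a * a)) ∧
      (TensorProduct.lid ℂ ℂ).toLinearMap ∘ₗ
          TensorProduct.map (funcOf k α κ) (funcOf k α κ) ∘ₗ Δ = funcOf k α κ)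
    ↔
    -- the coefficient conditions
    ((∀ i j : ZMod k, 0 ≤ α i j) ∧
      (Matrix.of κ).PosSemidef ∧
      (∀ i j : ZMod k, α i j =
          (∑ r : ZMod k, ∑ s : ZMod k, α (i - r) (j - s) * α r s)
            + (1 / (k : ℂ)) * ∑ r : ZMod k, ∑ s : ZMod k,
                etac k (i * (r - s)) * (κ r s * κ (r + j) (s + j))) ∧
      (∀ r s : ZMod k, κ r s =
          ∑ i : ZMod k, ∑ j : ZMod k,
            etac k (i * (s - r)) * α i j * (κ (r + j) (s + j) + κ (r - j) (s - j))) ∧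
      ((∑ i : ZMod k, ∑ j : ZMod k, α i j) + ∑ r : ZMod k, κ r r = 1)) :=
  stmt1_general k Δ hd he α κ
end
end

section
/- Let k ≥ 2 and let (α, κ) be an idempotent state system on A_k satisfying Σ_{i,j∈ℤ_k} α_{i,j} = Σ_{r∈ℤ_k} κ_{r,r} = 1/2. Fix t ∈ ℤ_k and suppose (r₀, s₀) ∈ ℤ_k×ℤ_k with r₀ − s₀ = t satisfies |κ_{r₀,s₀}| = max{ |κ_{r,s}| : r,s ∈ ℤ_k, r − s = t }. Then for every (i,j) ∈ ℤ_k×ℤ_k with α_{i,j} ≠ 0 one has κ_{r₀,s₀} = η^{−it} κ_{r₀+j,s₀+j} = η^{−it} κ_{r₀−j,s₀−j}. Moreover, if κ_{r₀,s₀} ≠ 0, then η^{2pt} = 1, where p := min{ i ∈ {1,…,k} : α_{i mod k, j} ≠ 0 for some j ∈ ℤ_k }. -/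
/-!
By (B), `κ_{r,s}` is an average of the numbers `η^{i(s−r)} κ_{r±j,s±j}` with weights
`α_{i,j}` (total weight `2 Σα = 1`), all lying on the diagonal `r − s = t`. At a point of
maximal modulus on that diagonal such an average can only be attained if every number of
positive weight equals `κ_{r,s}`: this is the equality case of the triangle inequality in the
real inner product space `ℂ`. Applying this at `(r₀, s₀)` and then at `(r₀ + j, s₀ + j)` for a
`j` with `α_{p,j} ≠ 0` gives `κ_{r₀,s₀} = η^{−2pt} κ_{r₀,s₀}`.
-/

open Finset
open scoped ComplexOrder

noncomputable section

/-- An *idempotent state system* on the Sekine quantum group `A_k`: the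
coefficients `α_{i,j}` are nonnegative reals (expressed via the order on `ℂ`),
the matrix `K = [κ_{r,s}]` is positive semidefinite, and the equations (A),
(B), (C) hold. -/
def IdemSystem (k : ℕ) [NeZero k] (α κ : ZMod k → ZMod k → ℂ) : Prop :=
  (∀ i j : ZMod k, 0 ≤ α i j) ∧
  (Matrix.of κ).PosSemidef ∧
  (∀ i j : ZMod k, α i j =
      (∑ r : ZMod k, ∑ s : ZMod k, α (i - r) (j - s) * α r s)
        + (1 / (k : ℂ)) * ∑ r : ZMod k, ∑ s : ZMod k,
            etac k (i * (r - s)) * (κ r s * κ (r + j) (s + j))) ∧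
  (∀ r s : ZMod k, κ r s =
      ∑ i : ZMod k, ∑ j : ZMod k,
        etac k (i * (s - r)) * α i j * (κ (r + j) (s + j) + κ (r - j) (s - j))) ∧
  ((∑ i : ZMod k, ∑ j : ZMod k, α i j) + ∑ r : ZMod k, κ r r = 1)

section Etac

variable {k : ℕ} [NeZero k]

lemma etac_eq_toCircle (t : ZMod k) : etac k t = ZMod.toCircle t :=
  (ZMod.toCircle_apply t).symm

lemma norm_etac (t : ZMod k) : ‖etac k t‖ = 1 := by
  rw [etac_eq_toCircle, Circle.norm_coe]

lemma etac_add (x y : ZMod k) : etac k (x + y) = etac k x * etac k y := by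
  simp only [etac_eq_toCircle, AddChar.map_add_eq_mul, Circle.coe_mul]

lemma etac_zero : etac k 0 = 1 := by
  simp [etac]

end Etac

lemma ZMod.exists_mem_Icc_natCast_eq (k : ℕ) [NeZero k] (i : ZMod k) :
    ∃ n : ℕ, 1 ≤ n ∧ n ≤ k ∧ (n : ZMod k) = i :=
  ⟨(i - 1).val + 1, by omega, (i - 1).val_lt, by simp⟩

theorem eq_sum_smul_of_norm_le_norm_sum_smul {ι E : Type*} [NormedAddCommGroup E]
    [InnerProductSpace ℝ E] {s : Finset ι} {w : ι → ℝ} {v : ι → E}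
    (hw₀ : ∀ i ∈ s, 0 ≤ w i) (hw₁ : ∑ i ∈ s, w i = 1)
    (hv : ∀ i ∈ s, ‖v i‖ ≤ ‖∑ j ∈ s, w j • v j‖) {i : ι} (hi : i ∈ s) (hwi : w i ≠ 0) :
    v i = ∑ j ∈ s, w j • v j := by
  set u := ∑ j ∈ s, w j • v j
  have hgap : ∀ j ∈ s, 0 ≤ w j * (‖u‖ ^ 2 - inner ℝ u (v j)) := fun j hj =>
    mul_nonneg (hw₀ j hj) <| sub_nonneg.2 <| (real_inner_le_norm u (v j)).trans <| by
      rw [sq]; exact mul_le_mul_of_nonneg_left (hv j hj) (norm_nonneg u)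
  have hsum : ∑ j ∈ s, w j * (‖u‖ ^ 2 - inner ℝ u (v j)) = 0 := by
    simp only [mul_sub, sum_sub_distrib, ← sum_mul, hw₁, one_mul, ← real_inner_smul_right,
      ← inner_sum, real_inner_self_eq_norm_sq, sub_self, u]
  have hinner : inner ℝ u (v i) = ‖u‖ ^ 2 := by
    have := (sum_eq_zero_iff_of_nonneg hgap).1 hsum i hi
    linarith [(mul_eq_zero.1 this).resolve_left hwi]
  have hvi : ‖v i - u‖ ^ 2 ≤ 0 := by
    rw [norm_sub_sq_real, real_inner_comm, hinner]
    nlinarith [hv i hi, norm_nonneg (v i), norm_nonneg u]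
  exact sub_eq_zero.1 (norm_eq_zero.1 (pow_eq_zero_iff two_ne_zero |>.1
    (le_antisymm hvi (sq_nonneg _))))

theorem eq_etac_mul_of_norm_le {k : ℕ} [NeZero k] {α κ : ZMod k → ZMod k → ℂ}
    (hα₀ : ∀ i j : ZMod k, 0 ≤ α i j)
    (hB : ∀ r s : ZMod k, κ r s = ∑ i : ZMod k, ∑ j : ZMod k,
        etac k (i * (s - r)) * α i j * (κ (r + j) (s + j) + κ (r - j) (s - j)))
    (hα : ∑ i : ZMod k, ∑ j : ZMod k, α i j = 1 / 2)
    {t r s : ZMod k} (hrs : r - s = t)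
    (hmax : ∀ r' s' : ZMod k, r' - s' = t → ‖κ r' s'‖ ≤ ‖κ r s‖)
    {i j : ZMod k} (hij : α i j ≠ 0) :
    κ r s = etac k (-(i * t)) * κ (r + j) (s + j) ∧
      κ r s = etac k (-(i * t)) * κ (r - j) (s - j) := by
  subst hrs
  have hα_re (i j : ZMod k) : α i j = (α i j).re :=
    Complex.eq_re_of_ofReal_le (r := 0) (by exact_mod_cast hα₀ i j)
  -- `(i, j, b)` indexes the term of (B) with `κ_{r+j,s+j}` (`b = true`) or `κ_{r−j,s−j}`,
  -- weighted by `α_{i,j}`; the total weight is `2 Σα = 1`.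
  let w : ZMod k × ZMod k × Bool → ℝ := fun q => (α q.1 q.2.1).re
  let v : ZMod k × ZMod k × Bool → ℂ := fun q =>
    etac k (-(q.1 * (r - s))) * κ (r + cond q.2.2 q.2.1 (-q.2.1)) (s + cond q.2.2 q.2.1 (-q.2.1))
  have hw₀ : ∀ q ∈ univ, 0 ≤ w q := fun q _ => (Complex.nonneg_iff.1 (hα₀ q.1 q.2.1)).1
  have hw₁ : ∑ q, w q = 1 := by
    have hα' : ∑ i, ∑ j, (α i j).re = 1 / 2 := by
      simpa [Complex.re_sum] using congrArg Complex.re hα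
    simp only [w, Fintype.sum_prod_type, Fintype.sum_bool, ← two_mul, ← mul_sum, hα']
    norm_num
  have hsum : ∑ q, w q • v q = κ r s := by
    rw [hB r s]
    simp only [Fintype.sum_prod_type, Fintype.sum_bool, w, v, cond_true, cond_false]
    refine sum_congr rfl fun i _ => sum_congr rfl fun j _ => ?_
    rw [Complex.real_smul, Complex.real_smul, ← hα_re, neg_mul_eq_mul_neg, neg_sub]
    simp only [sub_eq_add_neg]
    ring
  have hv : ∀ q ∈ univ, ‖v q‖ ≤ ‖∑ q, w q • v q‖ := fun q _ => by
    rw [hsum, norm_mul, norm_etac, one_mul]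
    exact hmax _ _ (by ring)
  have hwij : w (i, j, true) ≠ 0 := fun h0 => hij (by rw [hα_re]; exact_mod_cast h0)
  have hadd := eq_sum_smul_of_norm_le_norm_sum_smul hw₀ hw₁ hv (mem_univ (i, j, true)) hwij
  have hsub := eq_sum_smul_of_norm_le_norm_sum_smul hw₀ hw₁ hv (mem_univ (i, j, false)) hwij
  rw [hsum] at hadd hsub
  exact ⟨hadd.symm, by simpa [v, sub_eq_add_neg] using hsub.symm⟩

theorem stmt8_general (k : ℕ) [NeZero k] (α κ : ZMod k → ZMod k → ℂ)
    (h : IdemSystem k α κ)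
    (hα : (∑ i : ZMod k, ∑ j : ZMod k, α i j) = 1 / 2)
    (t r₀ s₀ : ZMod k) (ht : r₀ - s₀ = t)
    (hmax : ∀ r s : ZMod k, r - s = t → ‖κ r s‖ ≤ ‖κ r₀ s₀‖)
    (p : ℕ)
    (hp : p = sInf {i : ℕ | 1 ≤ i ∧ i ≤ k ∧ ∃ j : ZMod k, α (i : ZMod k) j ≠ 0}) :
    (∀ i j : ZMod k, α i j ≠ 0 →
      κ r₀ s₀ = etac k (-(i * t)) * κ (r₀ + j) (s₀ + j) ∧
      κ r₀ s₀ = etac k (-(i * t)) * κ (r₀ - j) (s₀ - j)) ∧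
    (κ r₀ s₀ ≠ 0 → etac k (2 * (p : ZMod k) * t) = 1) := by
  obtain ⟨hα₀, -, -, hB, -⟩ := h
  refine ⟨fun i j hij => eq_etac_mul_of_norm_le hα₀ hB hα ht hmax hij, fun hne => ?_⟩
  obtain ⟨i₀, -, hi₀⟩ := exists_ne_zero_of_sum_ne_zero (hα ▸ one_div_ne_zero two_ne_zero)
  obtain ⟨j₀, -, hij₀⟩ := exists_ne_zero_of_sum_ne_zero hi₀
  obtain ⟨n, hn₁, hnk, rfl⟩ := ZMod.exists_mem_Icc_natCast_eq k i₀
  have hsupp : {i : ℕ | 1 ≤ i ∧ i ≤ k ∧ ∃ j : ZMod k, α (i : ZMod k) j ≠ 0}.Nonempty :=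
    ⟨n, hn₁, hnk, j₀, hij₀⟩
  obtain ⟨-, -, j, hpj⟩ := hp ▸ Nat.sInf_mem hsupp
  have hfwd := (eq_etac_mul_of_norm_le hα₀ hB hα ht hmax hpj).1
  have hmax' : ∀ r s : ZMod k, r - s = t → ‖κ r s‖ ≤ ‖κ (r₀ + j) (s₀ + j)‖ := by
    rwa [hfwd, norm_mul, norm_etac, one_mul] at hmax
  have hback := (eq_etac_mul_of_norm_le hα₀ hB hα (by rw [← ht]; ring) hmax' hpj).2
  simp only [add_sub_cancel_right] at hback
  have hsq : etac k (-(p * t)) * etac k (-(p * t)) = 1 :=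
    mul_right_cancel₀ hne (by linear_combination -hfwd - etac k (-(p * t)) * hback)
  calc etac k (2 * p * t) = etac k (2 * p * t + (-(p * t) + -(p * t))) := by
        rw [etac_add, etac_add, hsq, mul_one]
    _ = 1 := by rw [← etac_zero (k := k)]; ring_nf

theorem stmt8 (k : ℕ) [NeZero k] (hk : 2 ≤ k) (α κ : ZMod k → ZMod k → ℂ)
    (h : IdemSystem k α κ)
    (hα : (∑ i : ZMod k, ∑ j : ZMod k, α i j) = 1 / 2)
    (hκ : (∑ r : ZMod k, κ r r) = 1 / 2)
    (t r₀ s₀ : ZMod k) (ht : r₀ - s₀ = t)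
    (hmax : ∀ r s : ZMod k, r - s = t → ‖κ r s‖ ≤ ‖κ r₀ s₀‖)
    (p : ℕ)
    (hp : p = sInf {i : ℕ | 1 ≤ i ∧ i ≤ k ∧ ∃ j : ZMod k, α (i : ZMod k) j ≠ 0}) :
    (∀ i j : ZMod k, α i j ≠ 0 →
      κ r₀ s₀ = etac k (-(i * t)) * κ (r₀ + j) (s₀ + j) ∧
      κ r₀ s₀ = etac k (-(i * t)) * κ (r₀ - j) (s₀ - j)) ∧
    (κ r₀ s₀ ≠ 0 → etac k (2 * (p : ZMod k) * t) = 1) :=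
  stmt8_general k α κ h hα t r₀ s₀ ht hmax p hp
end
end

section
/- Let k ≥ 2 and let (α, κ) be an idempotent state system on A_k satisfying Σ_{i,j∈ℤ_k} α_{i,j} = Σ_{r∈ℤ_k} κ_{r,r} = 1/2. Let q := min{ j ∈ {1,…,k} : α_{i, j mod k} ≠ 0 for some i ∈ ℤ_k }. Then q divides k and there exists l ∈ {0,…,q−1} such that κ_{r,r} = q/(2k) if r ≡ l (mod q) and κ_{r,r} = 0 otherwise; moreover κ_{r,s} = 0 whenever r ≢ l (mod q) or s ≢ l (mod q). -/
/-
Summing (A) over `i` and taking `r = s` in (B) (the characters `i ↦ η^{i(r-s)}` average to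
`δ_{r,s}`) gives a closed system for the column sums `A j = ∑ i, α i j` and the diagonal
`d r = κ r r`, both nonnegative:
`A j = ∑ s, A (j - s) * A s + ∑ r, d r * d (r + j)` and `d r = ∑ j, A j * (d (r + j) + d (r - j))`.
By positivity, the first equation makes the support of `A` closed under addition and shows that it
contains all differences of points of the support of `d`; hence it is a subgroup, namely `qℤ_k`.
With `∑ A = 1/2`, the second equation at a maximum point `r₀` of `d` is a maximum principle:
`d (r₀ + j) = d r₀` whenever `A j ≠ 0`. So `d` is constant on `r₀ + qℤ_k` and vanishes elsewhere,
and `∑ d = 1/2` fixes the constant as `q/(2k)`. A zero diagonal entry of the positive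
semidefinite `K` forces its row and column to vanish.
-/

open Finset
open scoped ComplexOrder

noncomputable section

/-- `j ∈ qℤ_k`, i.e. `j` is a multiple of `q` in `ℤ_k`. -/
abbrev InQ (k q : ℕ) (j : ZMod k) : Prop := ∃ t : ZMod k, j = (q : ZMod k) * t

lemma etac_eq_stdAddChar (k : ℕ) [NeZero k] (t : ZMod k) : etac k t = ZMod.stdAddChar t := by
  rw [ZMod.stdAddChar_apply, ZMod.toCircle_apply, etac]

lemma sum_etac_mul (k : ℕ) [NeZero k] (t : ZMod k) :
    ∑ i : ZMod k, etac k (i * t) = if t = 0 then (k : ℂ) else 0 := by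
  simp_rw [etac_eq_stdAddChar]
  rw [AddChar.sum_mulShift t (ZMod.isPrimitive_stdAddChar k), ZMod.card]
  split_ifs <;> simp

namespace Matrix.PosSemidef

variable {n 𝕜 : Type*} [Fintype n] [DecidableEq n] [RCLike 𝕜] {A : Matrix n n 𝕜}

lemma apply_eq_zero_of_diag_eq_zero_right (hA : A.PosSemidef) {r : n} (hr : A r r = 0) (s : n) :
    A s r = 0 := by
  have h := (hA.dotProduct_mulVec_zero_iff (Pi.single r 1)).mp (by simp [hr])
  simpa using congrFun h s

lemma apply_eq_zero_of_diag_eq_zero_left (hA : A.PosSemidef) {r : n} (hr : A r r = 0) (s : n) :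
    A r s = 0 := by
  rw [← hA.isHermitian.apply, hA.apply_eq_zero_of_diag_eq_zero_right hr, star_zero]

end Matrix.PosSemidef

structure IsDiagSystem {G : Type*} [AddCommGroup G] [Fintype G] (A d : G → ℝ) : Prop where
  col_nonneg : ∀ j, 0 ≤ A j
  diag_nonneg : ∀ r, 0 ≤ d r
  col_eq : ∀ j, A j = ∑ s, A (j - s) * A s + ∑ r, d r * d (r + j)
  diag_eq : ∀ r, d r = ∑ j, A j * (d (r + j) + d (r - j))
  col_sum : ∑ j, A j = 1 / 2
  diag_sum : ∑ r, d r = 1 / 2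

namespace IsDiagSystem

variable {G : Type*} [AddCommGroup G] [Fintype G] {A d : G → ℝ}

lemma apply_add_ne_zero (h : IsDiagSystem A d) {x y : G} (hx : A x ≠ 0) (hy : A y ≠ 0) :
    A (x + y) ≠ 0 := by
  have hxy : 0 < A x * A y :=
    mul_pos ((h.col_nonneg x).lt_of_ne' hx) ((h.col_nonneg y).lt_of_ne' hy)
  have hterm : A x * A y ≤ ∑ s, A (x + y - s) * A s := by
    simpa using single_le_sum (fun s _ => mul_nonneg (h.col_nonneg (x + y - s))
      (h.col_nonneg s)) (mem_univ y)
  have hrest : 0 ≤ ∑ r, d r * d (r + (x + y)) :=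
    sum_nonneg fun r _ => mul_nonneg (h.diag_nonneg _) (h.diag_nonneg _)
  linarith [h.col_eq (x + y)]

lemma apply_sub_ne_zero (h : IsDiagSystem A d) {u v : G} (hu : d u ≠ 0) (hv : d v ≠ 0) :
    A (v - u) ≠ 0 := by
  have huv : 0 < d u * d v :=
    mul_pos ((h.diag_nonneg u).lt_of_ne' hu) ((h.diag_nonneg v).lt_of_ne' hv)
  have hterm : d u * d v ≤ ∑ r, d r * d (r + (v - u)) := by
    simpa using single_le_sum (fun r _ => mul_nonneg (h.diag_nonneg r)
      (h.diag_nonneg (r + (v - u)))) (mem_univ u)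
  have hrest : 0 ≤ ∑ s, A (v - u - s) * A s :=
    sum_nonneg fun s _ => mul_nonneg (h.col_nonneg _) (h.col_nonneg _)
  linarith [h.col_eq (v - u)]

lemma exists_apply_ne_zero (h : IsDiagSystem A d) : ∃ u, d u ≠ 0 := by
  by_contra! hd
  simpa [hd] using h.diag_sum

lemma apply_zero_ne_zero (h : IsDiagSystem A d) : A 0 ≠ 0 := by
  obtain ⟨u, hu⟩ := h.exists_apply_ne_zero
  simpa using h.apply_sub_ne_zero hu hu

def supportAddSubmonoid (h : IsDiagSystem A d) : AddSubmonoid G where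
  carrier := Function.support A
  add_mem' := h.apply_add_ne_zero
  zero_mem' := h.apply_zero_ne_zero

def supportAddSubgroup (h : IsDiagSystem A d) : AddSubgroup G where
  toAddSubmonoid := h.supportAddSubmonoid
  neg_mem' {x} hx := by
    have hneg : (Nat.card G - 1) • x = -x := by
      rw [eq_neg_iff_add_eq_zero, ← succ_nsmul, Nat.sub_add_cancel Nat.card_pos,
        card_nsmul_eq_zero']
    exact hneg ▸ AddSubmonoid.nsmul_mem _ hx _

@[simp]
lemma mem_supportAddSubgroup (h : IsDiagSystem A d) {x : G} :
    x ∈ h.supportAddSubgroup ↔ A x ≠ 0 :=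
  Iff.rfl

lemma apply_add_eq_of_forall_le (h : IsDiagSystem A d) {r₀ : G} (hmax : ∀ r, d r ≤ d r₀)
    {j : G} (hj : A j ≠ 0) : d (r₀ + j) = d r₀ := by
  have hdefect : ∑ i, A i * (2 * d r₀ - (d (r₀ + i) + d (r₀ - i))) = 0 := by
    simp only [mul_sub, sum_sub_distrib, ← h.diag_eq, ← sum_mul, h.col_sum]
    ring
  have hnonneg : ∀ i ∈ univ, 0 ≤ A i * (2 * d r₀ - (d (r₀ + i) + d (r₀ - i))) := fun i _ =>
    mul_nonneg (h.col_nonneg i) (by linarith [hmax (r₀ + i), hmax (r₀ - i)])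
  have hj0 := (sum_eq_zero_iff_of_nonneg hnonneg).mp hdefect j (mem_univ j)
  linarith [(mul_eq_zero.mp hj0).resolve_left hj, hmax (r₀ + j), hmax (r₀ - j)]

lemma apply_eq_ite (h : IsDiagSystem A d) {r₀ : G} (hmax : ∀ r, d r ≤ d r₀) (v : G) :
    d v = if A (v - r₀) ≠ 0 then d r₀ else 0 := by
  obtain ⟨u, hu⟩ := h.exists_apply_ne_zero
  have hr₀ : d r₀ ≠ 0 := ((h.diag_nonneg u).lt_of_ne' hu |>.trans_le (hmax u)).ne'
  split_ifs with hv
  · simpa using h.apply_add_eq_of_forall_le hmax hv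
  · by_contra hdv
    exact hv (h.apply_sub_ne_zero hr₀ hdv)

lemma natCard_supportAddSubgroup_mul (h : IsDiagSystem A d) {r₀ : G} (hmax : ∀ r, d r ≤ d r₀) :
    Nat.card h.supportAddSubgroup * d r₀ = 1 / 2 := by
  have hcard : Nat.card h.supportAddSubgroup = #{x | A x ≠ 0} := by
    rw [← Fintype.card_subtype, ← Nat.card_eq_fintype_card]
    rfl
  rw [← h.diag_sum, Finset.sum_congr rfl fun v _ => h.apply_eq_ite hmax v,
    ← Equiv.sum_comp (Equiv.addRight r₀)]
  simp only [Equiv.coe_addRight, add_sub_cancel_right, sum_ite, sum_const_zero, add_zero,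
    sum_const, nsmul_eq_mul, hcard]

end IsDiagSystem

namespace ZMod

variable {k : ℕ} [NeZero k] {S : AddSubgroup (ZMod k)} {q : ℕ}

lemma natCast_mem_of_eq_sInf (hq : q = sInf {j : ℕ | 1 ≤ j ∧ j ≤ k ∧ (j : ZMod k) ∈ S}) :
    1 ≤ q ∧ q ≤ k ∧ (q : ZMod k) ∈ S :=
  hq ▸ Nat.sInf_mem (s := {j : ℕ | 1 ≤ j ∧ j ≤ k ∧ (j : ZMod k) ∈ S})
    ⟨k, NeZero.one_le, le_rfl, by simp [S.zero_mem]⟩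

lemma dvd_of_natCast_mem_of_eq_sInf (hq : q = sInf {j : ℕ | 1 ≤ j ∧ j ≤ k ∧ (j : ZMod k) ∈ S})
    {n : ℕ} (hn : (n : ZMod k) ∈ S) : q ∣ n := by
  obtain ⟨hq1, hqk, hqS⟩ := natCast_mem_of_eq_sInf hq
  have hmod : ((n % q : ℕ) : ZMod k) ∈ S := by
    have hsplit : ((n % q : ℕ) : ZMod k) = n - (n / q) • (q : ZMod k) := by
      rw [eq_sub_iff_add_eq, nsmul_eq_mul, mul_comm, ← Nat.cast_mul, ← Nat.cast_add,
        Nat.mod_add_div]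
    exact hsplit ▸ S.sub_mem hn (S.nsmul_mem hqS _)
  by_contra hnd
  have hmod_pos : 1 ≤ n % q := Nat.one_le_iff_ne_zero.mpr (mt Nat.dvd_of_mod_eq_zero hnd)
  have hle : q ≤ n % q :=
    hq.trans_le (Nat.sInf_le ⟨hmod_pos, (Nat.mod_lt n hq1).le.trans hqk, hmod⟩)
  exact (Nat.mod_lt n hq1).not_ge hle

lemma dvd_and_eq_zmultiples_of_eq_sInf
    (hq : q = sInf {j : ℕ | 1 ≤ j ∧ j ≤ k ∧ (j : ZMod k) ∈ S}) :
    q ∣ k ∧ S = AddSubgroup.zmultiples (q : ZMod k) := by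
  refine ⟨dvd_of_natCast_mem_of_eq_sInf hq (by simp [S.zero_mem]),
    le_antisymm (fun x hx => ?_)
      (AddSubgroup.zmultiples_le.mpr (natCast_mem_of_eq_sInf hq).2.2)⟩
  obtain ⟨m, hm⟩ := dvd_of_natCast_mem_of_eq_sInf hq (n := x.val) (by simpa using hx)
  rw [← natCast_zmod_val x, hm, Nat.cast_mul, mul_comm, ← nsmul_eq_mul]
  exact AddSubgroup.nsmul_mem_zmultiples _ _

lemma natCard_zmultiples_natCast (hq : q ∣ k) :
    Nat.card (AddSubgroup.zmultiples (q : ZMod k)) = k / q := by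
  rw [Nat.card_zmultiples, addOrderOf_coe _ (NeZero.ne k), Nat.gcd_eq_right hq]

lemma sub_natCast_val_mod_mem_zmultiples (r : ZMod k) (q : ℕ) :
    r - ((r.val % q : ℕ) : ZMod k) ∈ AddSubgroup.zmultiples (q : ZMod k) := by
  have hr : r = ((q * (r.val / q) + r.val % q : ℕ) : ZMod k) := by
    rw [Nat.div_add_mod, natCast_zmod_val]
  have hsplit : r - ((r.val % q : ℕ) : ZMod k) = (r.val / q) • (q : ZMod k) := by
    nth_rewrite 1 [hr]
    push_cast
    rw [nsmul_eq_mul]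
    ring
  exact hsplit ▸ AddSubgroup.nsmul_mem_zmultiples _ _

end ZMod

lemma inQ_iff_mem_zmultiples (k q : ℕ) (x : ZMod k) :
    InQ k q x ↔ x ∈ AddSubgroup.zmultiples (q : ZMod k) := by
  rw [AddSubgroup.mem_zmultiples_iff]
  constructor
  · rintro ⟨t, rfl⟩
    obtain ⟨m, rfl⟩ := ZMod.intCast_surjective t
    exact ⟨m, by rw [zsmul_eq_mul, mul_comm]⟩
  · rintro ⟨m, rfl⟩
    exact ⟨m, by rw [zsmul_eq_mul, mul_comm]⟩

namespace IdemSystem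

variable {k : ℕ} [NeZero k] {α κ : ZMod k → ZMod k → ℂ}

lemma alpha_eq_ofReal_re (h : IdemSystem k α κ) (i j : ZMod k) : α i j = (α i j).re :=
  Complex.eq_re_of_ofReal_le (by rw [Complex.ofReal_zero]; exact h.1 i j)

lemma diag_eq_ofReal_re (h : IdemSystem k α κ) (r : ZMod k) : κ r r = (κ r r).re :=
  Complex.eq_re_of_ofReal_le (by rw [Complex.ofReal_zero]; exact h.2.1.diag_nonneg)

lemma sum_alpha_eq (h : IdemSystem k α κ) (j : ZMod k) :
    ∑ i, α i j = ∑ s, (∑ i, α i (j - s)) * ∑ i, α i s + ∑ r, κ r r * κ (r + j) (r + j) := by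
  have hconv :
      ∑ i, ∑ r, ∑ s, α (i - r) (j - s) * α r s = ∑ s, (∑ i, α i (j - s)) * ∑ r, α r s := by
    calc ∑ i, ∑ r, ∑ s, α (i - r) (j - s) * α r s
        = ∑ r, ∑ s, (∑ i, α (i - r) (j - s)) * α r s := by
          rw [sum_comm]
          exact sum_congr rfl fun r _ => by rw [sum_comm]; simp only [sum_mul]
      _ = ∑ r, ∑ s, (∑ i, α i (j - s)) * α r s := by
          refine sum_congr rfl fun r _ => sum_congr rfl fun s _ => ?_
          rw [← Equiv.sum_comp (Equiv.subRight r) (fun i => α i (j - s))]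
          rfl
      _ = ∑ s, (∑ i, α i (j - s)) * ∑ r, α r s := by
          rw [sum_comm]
          simp only [mul_sum]
  have horth : ∑ i, (1 / (k : ℂ)) * ∑ r, ∑ s, etac k (i * (r - s)) * (κ r s * κ (r + j) (s + j)) =
      ∑ r, κ r r * κ (r + j) (r + j) := by
    calc _ = (1 / (k : ℂ)) *
          ∑ r, ∑ s, (∑ i, etac k (i * (r - s))) * (κ r s * κ (r + j) (s + j)) := by
          rw [← mul_sum, sum_comm]
          exact congrArg _ (sum_congr rfl fun r _ => by rw [sum_comm]; simp only [sum_mul])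
      _ = (1 / (k : ℂ)) * ∑ r, (k : ℂ) * (κ r r * κ (r + j) (r + j)) := by
          simp [sum_etac_mul, sub_eq_zero]
      _ = _ := by rw [← mul_sum, ← mul_assoc, one_div_mul_cancel (NeZero.ne _), one_mul]
  rw [← hconv, ← horth, ← sum_add_distrib]
  exact sum_congr rfl fun i _ => h.2.2.1 i j

lemma diag_eq_sum (h : IdemSystem k α κ) (r : ZMod k) :
    κ r r = ∑ j, (∑ i, α i j) * (κ (r + j) (r + j) + κ (r - j) (r - j)) := by
  rw [h.2.2.2.1 r r, sum_comm]
  simp [sum_mul, etac]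

lemma isDiagSystem (h : IdemSystem k α κ) (hα : ∑ i, ∑ j, α i j = 1 / 2)
    (hκ : ∑ r, κ r r = 1 / 2) :
    IsDiagSystem (fun j => ∑ i, (α i j).re) (fun r => (κ r r).re) where
  col_nonneg j := sum_nonneg fun i _ => (Complex.nonneg_iff.mp (h.1 i j)).1
  diag_nonneg r := (Complex.nonneg_iff.mp h.2.1.diag_nonneg).1
  col_eq j := Complex.ofReal_injective <| by
    push_cast
    simpa only [← h.alpha_eq_ofReal_re, ← h.diag_eq_ofReal_re] using h.sum_alpha_eq j
  diag_eq r := Complex.ofReal_injective <| by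
    push_cast
    simpa only [← h.alpha_eq_ofReal_re, ← h.diag_eq_ofReal_re] using h.diag_eq_sum r
  col_sum := Complex.ofReal_injective <| by
    push_cast
    rw [sum_comm]
    simpa only [← h.alpha_eq_ofReal_re] using hα
  diag_sum := Complex.ofReal_injective <| by
    push_cast
    simpa only [← h.diag_eq_ofReal_re] using hκ

lemma sum_re_ne_zero_iff (h : IdemSystem k α κ) (j : ZMod k) :
    ∑ i, (α i j).re ≠ 0 ↔ ∃ i, α i j ≠ 0 := by
  rw [Ne, sum_eq_zero_iff_of_nonneg fun i _ => (Complex.nonneg_iff.mp (h.1 i j)).1]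
  simp only [mem_univ, true_implies, not_forall]
  refine exists_congr fun i => not_congr ⟨fun hi => ?_, fun hi => by simp [hi]⟩
  rw [h.alpha_eq_ofReal_re, hi, Complex.ofReal_zero]

lemma apply_eq_zero_of_diag_eq_zero (h : IdemSystem k α κ) {r : ZMod k} (hr : κ r r = 0)
    (s : ZMod k) : κ r s = 0 ∧ κ s r = 0 :=
  ⟨h.2.1.apply_eq_zero_of_diag_eq_zero_left hr s, h.2.1.apply_eq_zero_of_diag_eq_zero_right hr s⟩

end IdemSystem

theorem stmt9_general (k : ℕ) [NeZero k] (α κ : ZMod k → ZMod k → ℂ)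
    (h : IdemSystem k α κ)
    (hα : (∑ i : ZMod k, ∑ j : ZMod k, α i j) = 1 / 2)
    (hκ : (∑ r : ZMod k, κ r r) = 1 / 2)
    (q : ℕ)
    (hq : q = sInf {j : ℕ | 1 ≤ j ∧ j ≤ k ∧ ∃ i : ZMod k, α i (j : ZMod k) ≠ 0}) :
    q ∣ k ∧
    ∃ l : ℕ, l < q ∧
      (∀ r : ZMod k,
        (InQ k q (r - (l : ZMod k)) → κ r r = (q : ℂ) / (2 * (k : ℂ))) ∧
        (¬ InQ k q (r - (l : ZMod k)) → κ r r = 0)) ∧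
      (∀ r s : ZMod k,
        (¬ InQ k q (r - (l : ZMod k)) ∨ ¬ InQ k q (s - (l : ZMod k))) → κ r s = 0) := by
  have hD := h.isDiagSystem hα hκ
  obtain ⟨r₀, hmax⟩ := Finite.exists_max fun r => (κ r r).re
  have hqS : q = sInf {j : ℕ | 1 ≤ j ∧ j ≤ k ∧ (j : ZMod k) ∈ hD.supportAddSubgroup} := by
    simp only [hq, IsDiagSystem.mem_supportAddSubgroup, h.sum_re_ne_zero_iff]
  obtain ⟨hqk, hS⟩ := ZMod.dvd_and_eq_zmultiples_of_eq_sInf hqS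
  have hq0 : 0 < q := Nat.pos_of_dvd_of_pos hqk (NeZero.pos k)
  have hM : (κ r₀ r₀).re = q / (2 * k) := by
    have hcard := hD.natCard_supportAddSubgroup_mul hmax
    rw [hS, ZMod.natCard_zmultiples_natCast hqk, Nat.cast_div hqk (by positivity)] at hcard
    field_simp at hcard
    rw [eq_div_iff (by simp [NeZero.ne k])]
    linarith
  set l := r₀.val % q
  have hl : ∀ r, InQ k q (r - l) ↔ ∑ i, (α i (r - r₀)).re ≠ 0 := fun r => by
    rw [inQ_iff_mem_zmultiples, ← hS, ← sub_add_sub_cancel r r₀ l,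
      add_mem_cancel_right (hS ▸ ZMod.sub_natCast_val_mod_mem_zmultiples r₀ q)]
    rfl
  have hdiag : ∀ r, κ r r = if InQ k q (r - l) then (q : ℂ) / (2 * k) else 0 := fun r => by
    rw [h.diag_eq_ofReal_re, hD.apply_eq_ite hmax r, hM]
    simp only [← hl]
    split_ifs <;> simp
  refine ⟨hqk, l, Nat.mod_lt _ hq0, fun r => ⟨fun hr => by simp [hdiag, hr],
    fun hr => by simp [hdiag, hr]⟩, fun r s hrs => ?_⟩
  rcases hrs with hr | hs
  · exact (h.apply_eq_zero_of_diag_eq_zero (by simp [hdiag, hr]) s).1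
  · exact (h.apply_eq_zero_of_diag_eq_zero (by simp [hdiag, hs]) r).2

theorem stmt9 (k : ℕ) [NeZero k] (hk : 2 ≤ k) (α κ : ZMod k → ZMod k → ℂ)
    (h : IdemSystem k α κ)
    (hα : (∑ i : ZMod k, ∑ j : ZMod k, α i j) = 1 / 2)
    (hκ : (∑ r : ZMod k, κ r r) = 1 / 2)
    (q : ℕ)
    (hq : q = sInf {j : ℕ | 1 ≤ j ∧ j ≤ k ∧ ∃ i : ZMod k, α i (j : ZMod k) ≠ 0}) :
    q ∣ k ∧
    ∃ l : ℕ, l < q ∧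
      (∀ r : ZMod k,
        (InQ k q (r - (l : ZMod k)) → κ r r = (q : ℂ) / (2 * (k : ℂ))) ∧
        (¬ InQ k q (r - (l : ZMod k)) → κ r r = 0)) ∧
      (∀ r s : ZMod k,
        (¬ InQ k q (r - (l : ZMod k)) ∨ ¬ InQ k q (s - (l : ZMod k))) → κ r s = 0) :=
  stmt9_general k α κ h hα hκ q hq
end
end
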